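/- Let q ∈ (0, π/2), c ∈ (0, π), and let Γ ⊆ ℝ² be a set with 0 ∉ Γ. Suppose v ∈ Γ is a (q,c)-regeneration site of Γ, i.e. v ≠ 0 and Γ ∩ W_{v,c} ⊆ C^F_{π/2−q}(v) ∪ C^B_{π/2−q}(v). Then the closed ray {t·v : t ≥ 0} from the origin through v intersects Γ exactly in the single point v. -/

import Mathlib

open InnerProductGeometry Real Set Metric Pointwise RealInnerProductSpace

/-- `v` rotated counterclockwise by `π/2`. -/
noncomputable def perp (v : EuclideanSpace ℝ (Fin 2)) : EuclideanSpace ℝ (Fin 2) :=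
  (WithLp.equiv 2 (Fin 2 → ℝ)).symm ![-(v 1), v 0]

/-- The forward cone `C^F_{π/2 - q}(v)`. -/
noncomputable def coneF (q : ℝ) (v : EuclideanSpace ℝ (Fin 2)) :
    Set (EuclideanSpace ℝ (Fin 2)) :=
  {v} ∪ {w | w ≠ v ∧ angle (w - v) (perp v) ≤ π / 2 - q}

/-- The backward cone `C^B_{π/2 - q}(v)`. -/
noncomputable def coneB (q : ℝ) (v : EuclideanSpace ℝ (Fin 2)) :
    Set (EuclideanSpace ℝ (Fin 2)) :=
  {v} ∪ {w | w ≠ v ∧ angle (w - v) (-(perp v)) ≤ π / 2 - q}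

/-- The cone `W_{v,c}` about direction `v` with apex `0` and half-aperture `c`. -/
noncomputable def coneW (v : EuclideanSpace ℝ (Fin 2)) (c : ℝ) :
    Set (EuclideanSpace ℝ (Fin 2)) :=
  {0} ∪ {z | z ≠ 0 ∧ angle z v ≤ c}

/-- The set of `(q,c)`-regeneration sites of `Γ`, as seen from the origin. -/
noncomputable def RG (q c : ℝ) (Γ : Set (EuclideanSpace ℝ (Fin 2))) :
    Set (EuclideanSpace ℝ (Fin 2)) :=
  {v | v ∈ Γ ∧ v ≠ 0 ∧ Γ ∩ coneW v c ⊆ coneF q v ∪ coneB q v}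

/-- The set of `(q,c)`-regeneration sites of `Γ` as seen from `x`:
`RG_{q,c,x}(Γ) = x + RG_{q,c}(Γ - x)`. -/
noncomputable def RGat (q c : ℝ) (x : EuclideanSpace ℝ (Fin 2))
    (Γ : Set (EuclideanSpace ℝ (Fin 2))) : Set (EuclideanSpace ℝ (Fin 2)) :=
  (fun z => x + z) '' RG q c ((fun z => z - x) '' Γ)

/- Every point `t • v` of the ray lies in `W_{v,c}`, while `t • v - v` is parallel to `v`, hence
orthogonal to `v^⊥`: it makes the angle `π/2 > π/2 - q` with `±v^⊥`, so `t • v` lies in neither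
`C^F_{π/2-q}(v)` nor `C^B_{π/2-q}(v)` unless `t • v = v`. -/

lemma inner_perp (v : EuclideanSpace ℝ (Fin 2)) : ⟪v, perp v⟫ = 0 := by
  simp [perp, PiLp.inner_apply, Fin.sum_univ_two]
  ring

lemma smul_mem_coneW {c t : ℝ} (hc : 0 ≤ c) (ht : 0 ≤ t) (v : EuclideanSpace ℝ (Fin 2)) :
    t • v ∈ coneW v c := by
  rcases ht.eq_or_lt with rfl | ht
  · exact Or.inl (zero_smul ℝ v)
  rcases eq_or_ne v 0 with rfl | hv
  · exact Or.inl (smul_zero t)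
  exact Or.inr ⟨smul_ne_zero ht.ne' hv, by rwa [angle_smul_left_of_pos _ _ ht, angle_self hv]⟩

lemma notMem_coneF_of_inner_eq_zero {q : ℝ} (hq : 0 < q) {v w : EuclideanSpace ℝ (Fin 2)}
    (hwv : w ≠ v) (h : ⟪w - v, perp v⟫ = 0) : w ∉ coneF q v := by
  rintro (hw | ⟨-, hw⟩)
  · exact hwv hw
  · rw [(inner_eq_zero_iff_angle_eq_pi_div_two _ _).mp h] at hw
    linarith

lemma notMem_coneB_of_inner_eq_zero {q : ℝ} (hq : 0 < q) {v w : EuclideanSpace ℝ (Fin 2)}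
    (hwv : w ≠ v) (h : ⟪w - v, perp v⟫ = 0) : w ∉ coneB q v := by
  rintro (hw | ⟨-, hw⟩)
  · exact hwv hw
  · rw [(inner_eq_zero_iff_angle_eq_pi_div_two _ _).mp (by rw [inner_neg_right, h, neg_zero])] at hw
    linarith

theorem stmt8_general (q c : ℝ) (hq : 0 < q) (hc : 0 < c)
    (Γ : Set (EuclideanSpace ℝ (Fin 2)))
    (v : EuclideanSpace ℝ (Fin 2)) (hvΓ : v ∈ Γ)
    (hreg : Γ ∩ coneW v c ⊆ coneF q v ∪ coneB q v) :
    {w : EuclideanSpace ℝ (Fin 2) | ∃ t : ℝ, 0 ≤ t ∧ w = t • v} ∩ Γ = {v} := by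
  ext w
  constructor
  · rintro ⟨⟨t, ht, rfl⟩, hw⟩
    by_contra hwv
    have horth : ⟪t • v - v, perp v⟫ = 0 := by
      rw [inner_sub_left, real_inner_smul_left, inner_perp, mul_zero, sub_zero]
    rcases hreg ⟨hw, smul_mem_coneW hc.le ht v⟩ with hF | hB
    · exact notMem_coneF_of_inner_eq_zero hq hwv horth hF
    · exact notMem_coneB_of_inner_eq_zero hq hwv horth hB
  · rintro rfl
    exact ⟨⟨1, zero_le_one, (one_smul ℝ w).symm⟩, hvΓ⟩

/-- The closed ray from the origin through a `(q,c)`-regeneration site `v` of `Γ`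
meets `Γ` exactly in the single point `v`. -/
theorem stmt8 (q c : ℝ) (hq : 0 < q) (hq' : q < π / 2) (hc : 0 < c) (hc' : c < π)
    (Γ : Set (EuclideanSpace ℝ (Fin 2))) (h0 : (0 : EuclideanSpace ℝ (Fin 2)) ∉ Γ)
    (v : EuclideanSpace ℝ (Fin 2)) (hvΓ : v ∈ Γ) (hv : v ≠ 0)
    (hreg : Γ ∩ coneW v c ⊆ coneF q v ∪ coneB q v) :
    {w : EuclideanSpace ℝ (Fin 2) | ∃ t : ℝ, 0 ≤ t ∧ w = t • v} ∩ Γ = {v} :=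
  stmt8_general q c hq hc Γ v hvΓ hreg
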